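/- For n = 3, the determinant of the 3×3 matrix (a(i,j))_{1≤i,j≤3} equals ∏_{1≤i≤j≤k≤3} ((1-q^{i+j+k-1})/(1-q^{i+j+k-2}))^2, as an identity of rational functions in q. -/

import Mathlib

open Finset

/-- The indeterminate `q`, as a rational function. -/
noncomputable def qq : RatFunc ℚ := RatFunc.X

/-- The Gaussian binomial coefficient as a rational function in `q`. -/
noncomputable def qbinom (a b : ℕ) : RatFunc ℚ :=
  ∏ t ∈ Finset.range b, (1 - qq ^ (a - t)) / (1 - qq ^ (b - t))

/-- Okada's matrix entry `a(i,j)` (1-indexed). -/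
noncomputable def okadaEntry (i j : ℕ) : RatFunc ℚ :=
  qq ^ (i + j - 1) * (qbinom (i + j - 2) (i - 1) + qq * qbinom (i + j - 1) i)
    + (1 + qq ^ i) * (if i = j then 1 else 0) - (if i = j + 1 then 1 else 0)

/-- Triples (i,j,k) with 1 ≤ i ≤ j ≤ k ≤ n. -/
def tsppTriples (n : ℕ) : Finset (ℕ × ℕ × ℕ) :=
  ((Finset.Icc 1 n) ×ˢ (Finset.Icc 1 n) ×ˢ (Finset.Icc 1 n)).filter
    (fun t => t.1 ≤ t.2.1 ∧ t.2.1 ≤ t.2.2)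

/-- Okada's conjectured right-hand side. -/
noncomputable def okadaRHS (n : ℕ) : RatFunc ℚ :=
  ∏ t ∈ tsppTriples n,
    ((1 - qq ^ (t.1 + t.2.1 + t.2.2 - 1)) / (1 - qq ^ (t.1 + t.2.1 + t.2.2 - 2))) ^ 2

/-!
For `i, j ≤ 3` every Gaussian binomial coefficient occurring in `a(i,j)` is a polynomial in `q`,
so the matrix is an explicit polynomial matrix. On the other side, the factor of a triple
depends only on `s = i + j + k`, and over the ten triples the product telescopes to
`((1 - q⁶)(1 - q⁸) / ((1 - q)(1 - q³)))² = ((1 + q³)(1 + q + ⋯ + q⁷))²`.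
The identity is then one between polynomials of degree 20.
-/

lemma one_sub_qq_pow_ne_zero {k : ℕ} (hk : k ≠ 0) : 1 - qq ^ k ≠ 0 := by
  have h := RatFunc.algebraMap_ne_zero (K := ℚ)
    (Polynomial.X_pow_sub_C_ne_zero (Nat.pos_of_ne_zero hk) (1 : ℚ))
  rw [← neg_ne_zero, neg_sub]
  simpa [qq] using h

lemma one_sub_qq_ne_zero : 1 - qq ≠ 0 := by
  simpa using one_sub_qq_pow_ne_zero one_ne_zero

lemma qbinom_eq_iff {a b : ℕ} {p : RatFunc ℚ} :
    qbinom a b = p ↔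
      p * ∏ t ∈ range b, (1 - qq ^ (b - t)) = ∏ t ∈ range b, (1 - qq ^ (a - t)) := by
  rw [qbinom, prod_div_distrib, div_eq_iff, eq_comm]
  exact prod_ne_zero_iff.2 fun t ht => one_sub_qq_pow_ne_zero (by grind)

lemma qbinom_zero_right (a : ℕ) : qbinom a 0 = 1 := by
  simp [qbinom]

lemma qbinom_self (n : ℕ) : qbinom n n = 1 := by
  rw [qbinom_eq_iff, one_mul]

lemma qbinom_one_right (n : ℕ) : qbinom (n + 1) 1 = ∑ i ∈ range (n + 1), qq ^ i := by
  rw [qbinom_eq_iff]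
  simpa using geom_sum_mul_neg qq (n + 1)

lemma qbinom_three_two : qbinom 3 2 = 1 + qq + qq ^ 2 := by
  rw [qbinom_eq_iff]
  simp only [prod_range_succ, range_one, prod_singleton, tsub_zero, Nat.add_one_sub_one, pow_one]
  ring

lemma qbinom_four_two : qbinom 4 2 = 1 + qq + 2 * qq ^ 2 + qq ^ 3 + qq ^ 4 := by
  rw [qbinom_eq_iff]
  simp only [prod_range_succ, range_one, prod_singleton, tsub_zero, Nat.add_one_sub_one, pow_one]
  ring

lemma qbinom_four_three : qbinom 4 3 = 1 + qq + qq ^ 2 + qq ^ 3 := by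
  rw [qbinom_eq_iff]
  simp only [prod_range_succ, range_one, prod_singleton, tsub_zero, Nat.add_one_sub_one,
    Nat.reduceSub, pow_one]
  ring

lemma qbinom_five_three :
    qbinom 5 3 = 1 + qq + 2 * qq ^ 2 + 2 * qq ^ 3 + 2 * qq ^ 4 + qq ^ 5 + qq ^ 6 := by
  rw [qbinom_eq_iff]
  simp only [prod_range_succ, range_one, prod_singleton, tsub_zero, Nat.add_one_sub_one,
    Nat.reduceSub, pow_one]
  ring

lemma okadaMatrix_three : (fun i j : Fin 3 => okadaEntry (i + 1) (j + 1)) = !![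
    1 + 2 * qq + qq ^ 2, qq ^ 2 + qq ^ 3 + qq ^ 4, qq ^ 3 + qq ^ 4 + qq ^ 5 + qq ^ 6;
    -1 + qq ^ 2 + qq ^ 3, 1 + qq ^ 2 + qq ^ 3 + 2 * qq ^ 4 + qq ^ 5 + qq ^ 6,
      qq ^ 4 + 2 * qq ^ 5 + 2 * qq ^ 6 + 2 * qq ^ 7 + qq ^ 8 + qq ^ 9;
    qq ^ 3 + qq ^ 4, -1 + qq ^ 4 + 2 * qq ^ 5 + 2 * qq ^ 6 + qq ^ 7 + qq ^ 8,
      1 + qq ^ 3 + qq ^ 5 + 2 * qq ^ 6 + 3 * qq ^ 7 + 3 * qq ^ 8 + 3 * qq ^ 9 + 2 * qq ^ 10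
        + qq ^ 11 + qq ^ 12] := by
  ext i j
  fin_cases i <;> fin_cases j <;>
    simp [okadaEntry, qbinom_zero_right, qbinom_self, qbinom_one_right, qbinom_three_two,
      qbinom_four_two, qbinom_four_three, qbinom_five_three, sum_range_succ] <;> ring

lemma tsppTriples_three : tsppTriples 3 =
    {(1, 1, 1), (1, 1, 2), (1, 1, 3), (1, 2, 2), (1, 2, 3), (1, 3, 3), (2, 2, 2), (2, 2, 3),
      (2, 3, 3), (3, 3, 3)} := by
  decide

lemma okadaRHS_three : okadaRHS 3 = ((1 + qq ^ 3) * ∑ i ∈ range 8, qq ^ i) ^ 2 := by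
  simp only [okadaRHS, tsppTriples_three, mem_insert, Prod.mk.injEq, OfNat.one_ne_ofNat,
    and_false, and_self, mem_singleton, or_self, not_false_eq_true, prod_insert, Nat.reduceAdd,
    Nat.add_one_sub_one, Nat.reduceSub, pow_one, Nat.reduceEqDiff, and_true, Nat.succ_ne_self,
    prod_singleton, sum_range_succ, range_one, sum_singleton, pow_zero]
  field_simp [one_sub_qq_ne_zero, one_sub_qq_pow_ne_zero]
  ring

theorem okada_det_3 :
    Matrix.det (fun i j : Fin 3 => okadaEntry (i + 1) (j + 1)) = okadaRHS 3 := by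
  rw [okadaMatrix_three, okadaRHS_three, Matrix.det_fin_three]
  simp only [Matrix.of_apply, Matrix.cons_val', Matrix.cons_val_zero, Matrix.cons_val_fin_one,
    Matrix.cons_val_one, Matrix.cons_val, sum_range_succ, range_one, sum_singleton, pow_zero,
    pow_one]
  ring
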